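/- arXiv:1912.02251 — 6 statements merged into one kernel-verified Lean document; each statement's English description precedes it below -/
import Mathlib

section
/- Let F : ℝ → ℝ be such that m ↦ F(m)·m is convex on [a,b] ⊆ [0,∞). Let 0 = d₀ < d₁ < ⋯ < d_k and 0 = z₀ < z₁ < ⋯ < z_k be real numbers such that (z_i - z_{i-1})/(d_i - d_{i-1}) ∈ [a,b] for all i = 1,…,k. Then z_k · F(z_k/d_k) ≤ Σ_{i=1}^{k} (z_i - z_{i-1}) · F((z_i - z_{i-1})/(d_i - d_{i-1})). -/
/-!
With `G m = F m * m`, the identity `z * F (z / d) = d * G (z / d)` turns both sides into values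
of the perspective `(d, z) ↦ d * G (z / d)` of `G`. Since `z_k / d_k` is the average of the ratios
`(z_i - z_{i-1}) / (d_i - d_{i-1})` with weights `(d_i - d_{i-1}) / d_k`, Jensen's inequality for
the convex function `G` gives the claim.
-/

open Finset

section Perspective

variable {𝕜 E β ι : Type*} [Field 𝕜] [LinearOrder 𝕜] [IsStrictOrderedRing 𝕜] [AddCommGroup E]
  [AddCommGroup β] [PartialOrder β] [IsOrderedAddMonoid β] [Module 𝕜 E] [Module 𝕜 β]
  [IsStrictOrderedModule 𝕜 β] {s : Set E} {g : E → β} {t : Finset ι} {w : ι → 𝕜} {x : ι → E}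

theorem ConvexOn.perspective_map_sum_le (hg : ConvexOn 𝕜 s g) (hw : ∀ i ∈ t, 0 < w i)
    (hx : ∀ i ∈ t, (w i)⁻¹ • x i ∈ s) :
    (∑ i ∈ t, w i) • g ((∑ i ∈ t, w i)⁻¹ • ∑ i ∈ t, x i) ≤
      ∑ i ∈ t, w i • g ((w i)⁻¹ • x i) := by
  rcases t.eq_empty_or_nonempty with rfl | ht
  · simp
  set W := ∑ i ∈ t, w i
  have hW : 0 < W := sum_pos hw ht
  have hjensen := hg.map_sum_le (w := fun i => w i / W) (p := fun i => (w i)⁻¹ • x i)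
    (fun i hi => div_nonneg (hw i hi).le hW.le) (by rw [← sum_div, div_self hW.ne']) hx
  have hpoints : ∑ i ∈ t, (w i / W) • (w i)⁻¹ • x i = W⁻¹ • ∑ i ∈ t, x i := by
    rw [smul_sum]
    refine sum_congr rfl fun i hi => ?_
    rw [smul_smul, div_mul_eq_mul_div, mul_inv_cancel₀ (hw i hi).ne', one_div]
  calc W • g (W⁻¹ • ∑ i ∈ t, x i)
      ≤ W • ∑ i ∈ t, (w i / W) • g ((w i)⁻¹ • x i) := by
        rw [← hpoints]; exact smul_le_smul_of_nonneg_left hjensen hW.le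
    _ = ∑ i ∈ t, w i • g ((w i)⁻¹ • x i) := by
        rw [smul_sum]
        refine sum_congr rfl fun i _ => ?_
        rw [smul_smul, mul_div_cancel₀ _ hW.ne']

end Perspective

theorem ConvexOn.sum_mul_map_div_sum_le {ι : Type*} {s : Set ℝ} {F : ℝ → ℝ}
    (hF : ConvexOn ℝ s (fun m => F m * m)) {t : Finset ι} {w x : ι → ℝ}
    (hw : ∀ i ∈ t, 0 < w i) (hx : ∀ i ∈ t, x i / w i ∈ s) :
    (∑ i ∈ t, x i) * F ((∑ i ∈ t, x i) / ∑ i ∈ t, w i) ≤ ∑ i ∈ t, x i * F (x i / w i) := by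
  rcases t.eq_empty_or_nonempty with rfl | ht
  · simp
  have hW : (∑ i ∈ t, w i) ≠ 0 := (sum_pos hw ht).ne'
  have hperspective : ∀ {u v : ℝ}, u ≠ 0 → v * F (v / u) = u * (F (v / u) * (v / u)) :=
    fun hu => by field_simp
  have key := hF.perspective_map_sum_le hw (by simpa only [smul_eq_mul, inv_mul_eq_div] using hx)
  simp only [smul_eq_mul, inv_mul_eq_div] at key
  rw [hperspective hW, sum_congr rfl fun i hi => hperspective (hw i hi).ne']
  exact key

theorem fundamental_inequality_general
    (F : ℝ → ℝ) (a b : ℝ)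
    (hconv : ConvexOn ℝ (Set.Icc a b) (fun m => F m * m))
    (k : ℕ) (d z : ℕ → ℝ)
    (hd0 : d 0 = 0) (hz0 : z 0 = 0)
    (hdmono : ∀ i < k, d i < d (i + 1))
    (hratio : ∀ i, 1 ≤ i → i ≤ k → (z i - z (i - 1)) / (d i - d (i - 1)) ∈ Set.Icc a b) :
    z k * F (z k / d k) ≤
      ∑ i ∈ Finset.range k, (z (i + 1) - z i) * F ((z (i + 1) - z i) / (d (i + 1) - d i)) := by
  have hw : ∀ i ∈ range k, 0 < d (i + 1) - d i := fun i hi =>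
    sub_pos.2 (hdmono i (mem_range.1 hi))
  have hx : ∀ i ∈ range k, (z (i + 1) - z i) / (d (i + 1) - d i) ∈ Set.Icc a b := fun i hi => by
    simpa using hratio (i + 1) le_add_self (mem_range.1 hi)
  simpa only [sum_range_sub, hd0, hz0, sub_zero] using hconv.sum_mul_map_div_sum_le hw hx

/-- Fundamental inequality via Jensen applied to the perspective function:
if `m ↦ F m * m` is convex on `[a,b] ⊆ [0,∞)`, `0 = d₀ < d₁ < ⋯ < d_k`,
`0 = z₀ < z₁ < ⋯ < z_k`, and all successive difference ratios lie in `[a,b]`, then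
`z_k * F (z_k / d_k) ≤ ∑_{i=1}^k (z_i - z_{i-1}) * F ((z_i - z_{i-1})/(d_i - d_{i-1}))`. -/
theorem fundamental_inequality
    (F : ℝ → ℝ) (a b : ℝ) (ha : 0 ≤ a) (hab : a < b)
    (hconv : ConvexOn ℝ (Set.Icc a b) (fun m => F m * m))
    (k : ℕ) (hk : 1 ≤ k) (d z : ℕ → ℝ)
    (hd0 : d 0 = 0) (hz0 : z 0 = 0)
    (hdmono : ∀ i < k, d i < d (i + 1))
    (hzmono : ∀ i < k, z i < z (i + 1))
    (hratio : ∀ i, 1 ≤ i → i ≤ k → (z i - z (i - 1)) / (d i - d (i - 1)) ∈ Set.Icc a b) :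
    z k * F (z k / d k) ≤
      ∑ i ∈ Finset.range k, (z (i + 1) - z i) * F ((z (i + 1) - z i) / (d (i + 1) - d i)) :=
  fundamental_inequality_general F a b hconv k d z hd0 hz0 hdmono hratio
end

section
/- Suppose the function g(m) = F(m)·m is continuous but not convex on an open interval (a,b), where F is a continuous CDF supported on [a,b] ⊆ (0,∞). Then there exist points (x₁,y₁),(x₂,y₂) in E* = {(x,y) : x/y ∈ (a,b), y > 0} such that the perspective function f(x,y) = x·F(x/y) violates midpoint convexity: f((x₁+x₂)/2, (y₁+y₂)/2) > (f(x₁,y₁) + f(x₂,y₂))/2, and moreover x₂/y₂ ≠ x₁/y₁ for such a violating pair. -/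
open Set AffineMap

theorem ContinuousOn.le_max_of_midpoint_le {φ : ℝ → ℝ} {a b t : ℝ}
    (hφ : ContinuousOn φ (Icc a b))
    (hmid : ∀ u ∈ Icc a b, ∀ v ∈ Icc a b, φ (midpoint ℝ u v) ≤ (φ u + φ v) / 2)
    (ht : t ∈ Icc a b) : φ t ≤ max (φ a) (φ b) := by
  by_contra! hgt
  obtain ⟨s₀, hs₀, hmax⟩ := isCompact_Icc.exists_isMaxOn ⟨t, ht⟩ hφ
  -- The leftmost maximiser `s` lies strictly inside `[a, b]`, and `φ` is strictly
  -- smaller at `s - δ`, which violates the midpoint inequality at `s`.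
  set S := Icc a b ∩ φ ⁻¹' {φ s₀}
  have hS : IsClosed S := hφ.preimage_isClosed_of_isClosed isClosed_Icc isClosed_singleton
  have hbdd : BddBelow S := ⟨a, fun x hx => hx.1.1⟩
  set s := sInf S
  obtain ⟨hs, hφs⟩ : s ∈ Icc a b ∧ φ s = φ s₀ := hS.csInf_mem ⟨s₀, hs₀, rfl⟩ hbdd
  have hφt : φ t ≤ φ s := hφs ▸ hmax ht
  have has : a < s := hs.1.lt_of_ne fun h => by rw [← h] at hφt; grind
  have hsb : s < b := hs.2.lt_of_ne fun h => by rw [h] at hφt; grind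
  set δ := min (s - a) (b - s)
  have hδ : 0 < δ := lt_min (by linarith) (by linarith)
  have hu : s - δ ∈ Icc a b := ⟨by linarith [min_le_left (s - a) (b - s)], by linarith⟩
  have hv : s + δ ∈ Icc a b := ⟨by linarith, by linarith [min_le_right (s - a) (b - s)]⟩
  have hφu : φ (s - δ) < φ s := by
    refine (hφs ▸ hmax hu).lt_of_ne fun h => ?_
    have : s ≤ s - δ := csInf_le hbdd ⟨hu, hφs ▸ h⟩
    linarith
  have hφv : φ (s + δ) ≤ φ s := hφs ▸ hmax hv
  have := hmid _ hu _ hv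
  rw [midpoint_sub_add] at this
  linarith

section

variable {E : Type*} [AddCommGroup E] [Module ℝ E] [TopologicalSpace E] [IsTopologicalAddGroup E]
  [ContinuousSMul ℝ E]

theorem ConvexOn.of_continuousOn_of_midpoint_le {s : Set E} {f : E → ℝ} (hs : Convex ℝ s)
    (hf : ContinuousOn f s)
    (hmid : ∀ x ∈ s, ∀ y ∈ s, f (midpoint ℝ x y) ≤ (f x + f y) / 2) : ConvexOn ℝ s f := by
  refine ⟨hs, fun x hx y hy p q hp hq hpq => ?_⟩
  -- Subtracting the chord turns `f` on the segment `[x, y]` into a midpoint convex function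
  -- on `[0, 1]` vanishing at both ends.
  set φ : ℝ → ℝ := fun t => f (lineMap x y t) - lineMap (f x) (f y) t
  have hseg : MapsTo (lineMap x y) (Icc (0 : ℝ) 1) s := fun t ht => hs.lineMap_mem hx hy ht
  have hφ : ContinuousOn φ (Icc 0 1) :=
    (hf.comp lineMap_continuous.continuousOn hseg).sub lineMap_continuous.continuousOn
  have hφmid : ∀ u ∈ Icc (0 : ℝ) 1, ∀ v ∈ Icc (0 : ℝ) 1,
      φ (midpoint ℝ u v) ≤ (φ u + φ v) / 2 := by
    intro u hu v hv
    have := hmid _ (hseg hu) _ (hseg hv)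
    change f (lineMap x y (midpoint ℝ u v)) - lineMap (f x) (f y) (midpoint ℝ u v) ≤ _
    rw [AffineMap.map_midpoint, AffineMap.map_midpoint,
      midpoint_eq_smul_add ℝ (lineMap (f x) (f y) u), smul_eq_mul, invOf_eq_inv]
    simp only [φ]
    linarith
  have := hφ.le_max_of_midpoint_le hφmid ⟨hq, by linarith⟩
  simp only [φ, lineMap_apply_zero, lineMap_apply_one, sub_self, max_self, sub_nonpos] at this
  obtain rfl : p = 1 - q := by linarith
  simpa only [lineMap_apply_module] using this

end

theorem perspective_midpoint_convexity_failure_general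
    (F : ℝ → ℝ) (a b : ℝ)
    (hFcont : Continuous F)
    (hnotconv : ¬ ConvexOn ℝ (Set.Ioo a b) (fun m => F m * m)) :
    ∃ x₁ y₁ x₂ y₂ : ℝ,
      (x₁ / y₁ ∈ Set.Ioo a b ∧ 0 < y₁) ∧
      (x₂ / y₂ ∈ Set.Ioo a b ∧ 0 < y₂) ∧
      ((x₁ + x₂) / 2) * F (((x₁ + x₂) / 2) / ((y₁ + y₂) / 2))
        > (x₁ * F (x₁ / y₁) + x₂ * F (x₂ / y₂)) / 2 ∧
      x₂ / y₂ ≠ x₁ / y₁ := by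
  -- On the line `y = 1` the perspective function is `m ↦ F m * m` itself.
  obtain ⟨m₁, hm₁, m₂, hm₂, hviol⟩ : ∃ m₁ ∈ Ioo a b, ∃ m₂ ∈ Ioo a b,
      (F m₁ * m₁ + F m₂ * m₂) / 2 < F (midpoint ℝ m₁ m₂) * midpoint ℝ m₁ m₂ := by
    by_contra! hmid
    exact hnotconv (.of_continuousOn_of_midpoint_le (convex_Ioo a b) (by fun_prop) hmid)
  have hne : m₁ ≠ m₂ := by
    rintro rfl
    rw [midpoint_self] at hviol
    linarith
  rw [midpoint_eq_smul_add, smul_eq_mul, invOf_eq_inv, inv_mul_eq_div] at hviol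
  refine ⟨m₁, 1, m₂, 1, ⟨by rwa [div_one], one_pos⟩, ⟨by rwa [div_one], one_pos⟩, ?_, ?_⟩
  · norm_num
    linarith
  · simpa only [div_one] using hne.symm

/-- If `g m = F m * m` is continuous but not convex on `(a,b)` (with `F`
a continuous CDF strictly increasing on `[a,b] ⊆ (0,∞)`), then the perspective function
`f (x,y) = x F (x/y)` violates midpoint convexity at some pair of points of
`E* = {(x,y) | x/y ∈ (a,b), y > 0}` with distinct ratios. -/
theorem perspective_midpoint_convexity_failure
    (F : ℝ → ℝ) (a b : ℝ) (ha : 0 < a) (hab : a < b)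
    (hFcont : Continuous F)
    (hFmono : StrictMonoOn F (Set.Icc a b))
    (hnotconv : ¬ ConvexOn ℝ (Set.Ioo a b) (fun m => F m * m)) :
    ∃ x₁ y₁ x₂ y₂ : ℝ,
      (x₁ / y₁ ∈ Set.Ioo a b ∧ 0 < y₁) ∧
      (x₂ / y₂ ∈ Set.Ioo a b ∧ 0 < y₂) ∧
      ((x₁ + x₂) / 2) * F (((x₁ + x₂) / 2) / ((y₁ + y₂) / 2))
        > (x₁ * F (x₁ / y₁) + x₂ * F (x₂ / y₂)) / 2 ∧
      x₂ / y₂ ≠ x₁ / y₁ :=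
  perspective_midpoint_convexity_failure_general F a b hFcont hnotconv
end

section
/- Let F be a continuous CDF supported on [a,b] ⊆ [0,∞) and consider a menu C = {(p₁,q₁),…,(p_n,q_n)} with 0 < p₁ < ⋯ < p_n, 0 < q₁ < ⋯ < q_n, and m_i := (p_i-p_{i-1})/(q_i-q_{i-1}) ∈ [a,b] strictly increasing (p₀=q₀=0). Let C' = C \ {(p₁,q₁)}. If F(m)·m is convex on [m₁, m₂] then π(C) ≤ π(C'), and if F(m)·m is concave on [m₁, m₂] then π(C) ≥ π(C'), where π(C) = p_n - Σ_{i=1}^n (p_i - p_{i-1})·F(m_i) and π(C') = p_n - (p₁+ (p₂-p₁))·F((p₂)/(q₂)) - Σ_{i=3}^n (p_i-p_{i-1})·F(m_i), i.e., π(C') is computed with the ratio p₂/q₂ in place of m₁ and m₂. -/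
/-!
Writing `mᵢ = xᵢ / yᵢ` with `xᵢ = pᵢ - pᵢ₋₁` and `yᵢ = qᵢ - qᵢ₋₁`, the term `xᵢ F(mᵢ)` equals
`yᵢ g(xᵢ / yᵢ)` for `g m = F m · m`, i.e. it is the perspective of `g` at `(xᵢ, yᵢ)`.
Removing `(p₁, q₁)` replaces the two perspectives at `(x₁, y₁)` and `(x₂, y₂)` by the single one
at their sum `(p₂, q₂)`, so the comparison is Jensen's inequality for `g` with weights
`y₁ / q₂` and `y₂ / q₂` at the points `m₁` and `m₂`.
-/

open Finset

theorem ConvexOn.perspective_add_le {s : Set ℝ} {g : ℝ → ℝ} (hg : ConvexOn ℝ s g)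
    {x₁ y₁ x₂ y₂ : ℝ} (hy₁ : 0 < y₁) (hy₂ : 0 < y₂) (h₁ : x₁ / y₁ ∈ s) (h₂ : x₂ / y₂ ∈ s) :
    (y₁ + y₂) * g ((x₁ + x₂) / (y₁ + y₂)) ≤ y₁ * g (x₁ / y₁) + y₂ * g (x₂ / y₂) := by
  have hy : 0 < y₁ + y₂ := add_pos hy₁ hy₂
  have hcomb : (y₁ / (y₁ + y₂)) • (x₁ / y₁) + (y₂ / (y₁ + y₂)) • (x₂ / y₂)
      = (x₁ + x₂) / (y₁ + y₂) := by
    simp only [smul_eq_mul]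
    field_simp
  have hjensen := hg.2 h₁ h₂ (by positivity : 0 ≤ y₁ / (y₁ + y₂))
    (by positivity : 0 ≤ y₂ / (y₁ + y₂)) (by field_simp)
  rw [hcomb, smul_eq_mul, smul_eq_mul] at hjensen
  calc (y₁ + y₂) * g ((x₁ + x₂) / (y₁ + y₂))
      ≤ (y₁ + y₂) * (y₁ / (y₁ + y₂) * g (x₁ / y₁) + y₂ / (y₁ + y₂) * g (x₂ / y₂)) :=
        mul_le_mul_of_nonneg_left hjensen hy.le
    _ = y₁ * g (x₁ / y₁) + y₂ * g (x₂ / y₂) := by field_simp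

theorem ConcaveOn.le_perspective_add {s : Set ℝ} {g : ℝ → ℝ} (hg : ConcaveOn ℝ s g)
    {x₁ y₁ x₂ y₂ : ℝ} (hy₁ : 0 < y₁) (hy₂ : 0 < y₂) (h₁ : x₁ / y₁ ∈ s) (h₂ : x₂ / y₂ ∈ s) :
    y₁ * g (x₁ / y₁) + y₂ * g (x₂ / y₂) ≤ (y₁ + y₂) * g ((x₁ + x₂) / (y₁ + y₂)) := by
  have := hg.neg.perspective_add_le hy₁ hy₂ h₁ h₂
  simp only [Pi.neg_apply, mul_neg] at this
  linarith

theorem perspective_mul_self_eq (F : ℝ → ℝ) {x y : ℝ} (hy : y ≠ 0) :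
    y * (F (x / y) * (x / y)) = x * F (x / y) := by
  field_simp

theorem ConvexOn.add_mul_apply_div_le {s : Set ℝ} {F : ℝ → ℝ}
    (hF : ConvexOn ℝ s fun m => F m * m) {x₁ y₁ x₂ y₂ : ℝ} (hy₁ : 0 < y₁) (hy₂ : 0 < y₂)
    (h₁ : x₁ / y₁ ∈ s) (h₂ : x₂ / y₂ ∈ s) :
    (x₁ + x₂) * F ((x₁ + x₂) / (y₁ + y₂)) ≤ x₁ * F (x₁ / y₁) + x₂ * F (x₂ / y₂) := by
  simpa only [perspective_mul_self_eq F hy₁.ne', perspective_mul_self_eq F hy₂.ne',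
    perspective_mul_self_eq F (add_pos hy₁ hy₂).ne'] using hF.perspective_add_le hy₁ hy₂ h₁ h₂

theorem ConcaveOn.le_add_mul_apply_div {s : Set ℝ} {F : ℝ → ℝ}
    (hF : ConcaveOn ℝ s fun m => F m * m) {x₁ y₁ x₂ y₂ : ℝ} (hy₁ : 0 < y₁) (hy₂ : 0 < y₂)
    (h₁ : x₁ / y₁ ∈ s) (h₂ : x₂ / y₂ ∈ s) :
    x₁ * F (x₁ / y₁) + x₂ * F (x₂ / y₂) ≤ (x₁ + x₂) * F ((x₁ + x₂) / (y₁ + y₂)) := by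
  simpa only [perspective_mul_self_eq F hy₁.ne', perspective_mul_self_eq F hy₂.ne',
    perspective_mul_self_eq F (add_pos hy₁ hy₂).ne'] using hF.le_perspective_add hy₁ hy₂ h₁ h₂

theorem Finset.sum_Icc_one_eq_add_add_sum_Icc_three {M : Type*} [AddCommMonoid M]
    (f : ℕ → M) {n : ℕ} (hn : 2 ≤ n) :
    ∑ i ∈ Icc 1 n, f i = f 1 + f 2 + ∑ i ∈ Icc 3 n, f i := by
  have hsplit : Icc 1 n = insert 1 (insert 2 (Icc 3 n)) := by
    ext i
    simp only [mem_Icc, mem_insert]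
    omega
  rw [hsplit, sum_insert (by simp), sum_insert (by simp), add_assoc]

theorem remove_lowest_pair_revenue_general
    (F : ℝ → ℝ)
    (n : ℕ) (hn : 2 ≤ n) (p q : ℕ → ℝ)
    (hp0 : p 0 = 0) (hq0 : q 0 = 0)
    (hqpos : 0 < q 1)
    (hqmono : ∀ i, 1 ≤ i → i < n → q i < q (i + 1))
    (hratiomono : ∀ i, 1 ≤ i → i < n →
      (p i - p (i - 1)) / (q i - q (i - 1)) <
        (p (i + 1) - p i) / (q (i + 1) - q i)) :
    (ConvexOn ℝ (Set.Icc (p 1 / q 1) ((p 2 - p 1) / (q 2 - q 1))) (fun m => F m * m) →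
      p n - ∑ i ∈ Finset.Icc 1 n,
          (p i - p (i - 1)) * F ((p i - p (i - 1)) / (q i - q (i - 1)))
        ≤ p n - p 2 * F (p 2 / q 2) - ∑ i ∈ Finset.Icc 3 n,
            (p i - p (i - 1)) * F ((p i - p (i - 1)) / (q i - q (i - 1))))
    ∧
    (ConcaveOn ℝ (Set.Icc (p 1 / q 1) ((p 2 - p 1) / (q 2 - q 1))) (fun m => F m * m) →
      p n - ∑ i ∈ Finset.Icc 1 n,
          (p i - p (i - 1)) * F ((p i - p (i - 1)) / (q i - q (i - 1)))
        ≥ p n - p 2 * F (p 2 / q 2) - ∑ i ∈ Finset.Icc 3 n,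
            (p i - p (i - 1)) * F ((p i - p (i - 1)) / (q i - q (i - 1)))) := by
  have hq12 : 0 < q 2 - q 1 := sub_pos.2 (hqmono 1 le_rfl hn)
  have hm12 : p 1 / q 1 < (p 2 - p 1) / (q 2 - q 1) := by
    simpa [hp0, hq0] using hratiomono 1 le_rfl hn
  have hm₁ : p 1 / q 1 ∈ Set.Icc (p 1 / q 1) ((p 2 - p 1) / (q 2 - q 1)) := ⟨le_rfl, hm12.le⟩
  have hm₂ : (p 2 - p 1) / (q 2 - q 1) ∈ Set.Icc (p 1 / q 1) ((p 2 - p 1) / (q 2 - q 1)) :=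
    ⟨hm12.le, le_rfl⟩
  rw [Finset.sum_Icc_one_eq_add_add_sum_Icc_three _ hn]
  simp only [Nat.sub_self, Nat.add_one_sub_one, hp0, hq0, sub_zero]
  constructor
  · intro hconv
    have := hconv.add_mul_apply_div_le hqpos hq12 hm₁ hm₂
    rw [add_sub_cancel, add_sub_cancel] at this
    linarith
  · intro hconc
    have := hconc.le_add_mul_apply_div hqpos hq12 hm₁ hm₂
    rw [add_sub_cancel, add_sub_cancel] at this
    linarith

/-- Removing the lowest pair `(p₁,q₁)` from a menu increases (decreases)
revenue if `F(m)·m` is convex (concave) on `[m₁, m₂]`, where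
`m_i = (p_i - p_{i-1})/(q_i - q_{i-1})`. -/
theorem remove_lowest_pair_revenue
    (F : ℝ → ℝ) (a b : ℝ) (ha : 0 ≤ a) (hab : a < b)
    (hFcont : ContinuousOn F (Set.Icc a b))
    (n : ℕ) (hn : 2 ≤ n) (p q : ℕ → ℝ)
    (hp0 : p 0 = 0) (hq0 : q 0 = 0)
    (hppos : 0 < p 1) (hqpos : 0 < q 1)
    (hpmono : ∀ i, 1 ≤ i → i < n → p i < p (i + 1))
    (hqmono : ∀ i, 1 ≤ i → i < n → q i < q (i + 1))
    (hratio : ∀ i, 1 ≤ i → i ≤ n →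
      (p i - p (i - 1)) / (q i - q (i - 1)) ∈ Set.Icc a b)
    (hratiomono : ∀ i, 1 ≤ i → i < n →
      (p i - p (i - 1)) / (q i - q (i - 1)) <
        (p (i + 1) - p i) / (q (i + 1) - q i)) :
    (ConvexOn ℝ (Set.Icc (p 1 / q 1) ((p 2 - p 1) / (q 2 - q 1))) (fun m => F m * m) →
      p n - ∑ i ∈ Finset.Icc 1 n,
          (p i - p (i - 1)) * F ((p i - p (i - 1)) / (q i - q (i - 1)))
        ≤ p n - p 2 * F (p 2 / q 2) - ∑ i ∈ Finset.Icc 3 n,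
            (p i - p (i - 1)) * F ((p i - p (i - 1)) / (q i - q (i - 1))))
    ∧
    (ConcaveOn ℝ (Set.Icc (p 1 / q 1) ((p 2 - p 1) / (q 2 - q 1))) (fun m => F m * m) →
      p n - ∑ i ∈ Finset.Icc 1 n,
          (p i - p (i - 1)) * F ((p i - p (i - 1)) / (q i - q (i - 1)))
        ≥ p n - p 2 * F (p 2 / q 2) - ∑ i ∈ Finset.Icc 3 n,
            (p i - p (i - 1)) * F ((p i - p (i - 1)) / (q i - q (i - 1)))) :=
  remove_lowest_pair_revenue_general F n hn p q hp0 hq0 hqpos hqmono hratiomono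
end

section
/- Let F be a continuous CDF with m ↦ F(m)·m convex on [a,b]. Fix a menu C = {(p₁,q₁),…,(p_n,q_n)} with 0<p₁<⋯<p_n, 0<q₁<⋯<q_n and all successive ratios m_i = (p_i-p_{i-1})/(q_i-q_{i-1}) in [a,b] and strictly increasing. Let μ:{1,…,k}→{1,…,n} be strictly increasing with μ(k)=n, μ(0):=0, and let C' be the sub-menu consisting of the pairs with indices in the image of μ. If F(m)m is convex on [m_{μ(j-1)+1}, m_{μ(j)}] for every j with μ(j) - μ(j-1) > 1, then π(C) ≤ π(C'). -/
/-!
Merging a block of consecutive items `l < i ≤ r` of the menu into the single item `r` replaces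
the block's loss terms `Δpᵢ · F(Δpᵢ / Δqᵢ)` by one term for the summed increments, since the
increments telescope. Writing `G m = F m * m`, each loss term `x · F(x / y) = y · G(x / y)` is the
perspective of `G`, so Jensen's inequality with weights `Δqᵢ` shows the merged loss is at most the
sum of the block's losses; the block's ratios all lie in `[m_{l+1}, m_r]` because they increase.
-/

open Finset

theorem ConvexOn.perspective_sum_le {ι : Type*} {s : Set ℝ} {g : ℝ → ℝ} (hg : ConvexOn ℝ s g)
    {t : Finset ι} (ht : t.Nonempty) {v w : ι → ℝ} (hw : ∀ i ∈ t, 0 < w i)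
    (hmem : ∀ i ∈ t, v i / w i ∈ s) :
    (∑ i ∈ t, w i) * g ((∑ i ∈ t, v i) / ∑ i ∈ t, w i) ≤ ∑ i ∈ t, w i * g (v i / w i) := by
  have hW : 0 < ∑ i ∈ t, w i := sum_pos hw ht
  have hcm : t.centerMass w (fun i => v i / w i) = (∑ i ∈ t, v i) / ∑ i ∈ t, w i := by
    have hsum : ∑ i ∈ t, w i • (v i / w i) = ∑ i ∈ t, v i :=
      sum_congr rfl fun i hi => by rw [smul_eq_mul, mul_div_cancel₀ _ (hw i hi).ne']
    rw [centerMass, hsum, smul_eq_mul, inv_mul_eq_div]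
  have jensen := hg.map_centerMass_le (fun i hi => (hw i hi).le) hW hmem
  rw [hcm, centerMass, smul_eq_mul, le_inv_mul_iff₀ hW] at jensen
  simpa using jensen

theorem ConvexOn.sum_mul_apply_div_le {ι : Type*} {s : Set ℝ} {F : ℝ → ℝ}
    (hF : ConvexOn ℝ s fun m => F m * m) {t : Finset ι} (ht : t.Nonempty) {v w : ι → ℝ}
    (hw : ∀ i ∈ t, 0 < w i) (hmem : ∀ i ∈ t, v i / w i ∈ s) :
    (∑ i ∈ t, v i) * F ((∑ i ∈ t, v i) / ∑ i ∈ t, w i) ≤ ∑ i ∈ t, v i * F (v i / w i) := by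
  have perspective : ∀ x y : ℝ, y ≠ 0 → x * F (x / y) = y * (F (x / y) * (x / y)) := by
    intro x y hy
    field_simp
  rw [perspective _ _ (sum_pos hw ht).ne',
    sum_congr rfl fun i hi => perspective _ _ (hw i hi).ne']
  exact hF.perspective_sum_le ht hw hmem

theorem Finset.sum_Ioc_sub_pred {M : Type*} [AddCommGroup M] (f : ℕ → M) {l r : ℕ} (h : l ≤ r) :
    ∑ i ∈ Ioc l r, (f i - f (i - 1)) = f r - f l := by
  induction r, h using Nat.le_induction with
  | base => simp
  | succ r hr ih =>
    rw [sum_Ioc_succ_top (by omega), ih, Nat.add_sub_cancel]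
    abel

theorem Finset.sum_Ioc_eq_sum_sum_Ioc {M : Type*} [AddCommMonoid M] (f : ℕ → M) {μ : ℕ → ℕ}
    {k : ℕ} (hμ : MonotoneOn μ (Set.Iic k)) :
    ∑ i ∈ Ioc (μ 0) (μ k), f i = ∑ j ∈ Icc 1 k, ∑ i ∈ Ioc (μ (j - 1)) (μ j), f i := by
  induction k with
  | zero => simp
  | succ k ih =>
    have hμ' : MonotoneOn μ (Set.Iic k) := hμ.mono (Set.Iic_subset_Iic.mpr k.le_succ)
    rw [sum_Icc_succ_top (by omega), Nat.add_sub_cancel, ← ih hμ',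
      sum_Ioc_consecutive _ (hμ' (by simp) (by simp) k.zero_le)
        (hμ (by simp) (by simp) k.le_succ)]

theorem merged_block_loss_le (F : ℝ → ℝ) (p q : ℕ → ℝ) {l r : ℕ} (hlr : l < r)
    (hq : ∀ i ∈ Ioc l r, q (i - 1) < q i)
    (hm : MonotoneOn (fun i => (p i - p (i - 1)) / (q i - q (i - 1))) (Set.Icc (l + 1) r))
    (hconv : 1 < r - l → ConvexOn ℝ
      (Set.Icc ((p (l + 1) - p l) / (q (l + 1) - q l)) ((p r - p (r - 1)) / (q r - q (r - 1))))
      fun m => F m * m) :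
    (p r - p l) * F ((p r - p l) / (q r - q l)) ≤
      ∑ i ∈ Ioc l r, (p i - p (i - 1)) * F ((p i - p (i - 1)) / (q i - q (i - 1))) := by
  obtain rfl | hlr' := (Nat.succ_le_of_lt hlr).eq_or_lt
  · simp [Nat.Ioc_succ_singleton]
  rw [← sum_Ioc_sub_pred p hlr.le, ← sum_Ioc_sub_pred q hlr.le]
  refine (hconv (by omega)).sum_mul_apply_div_le ⟨r, by simp [hlr]⟩
    (fun i hi => sub_pos.2 (hq i hi)) fun i hi => ?_
  have hi' : i ∈ Set.Icc (l + 1) r := by simpa [Nat.succ_le_iff] using hi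
  exact ⟨hm ⟨le_rfl, hlr'.le⟩ hi' hi'.1, hm hi' ⟨hi'.1.trans hi'.2, le_rfl⟩ hi'.2⟩

theorem submenu_dominance_general
    (F : ℝ → ℝ) (n k : ℕ) (p q : ℕ → ℝ)
    (hq0 : q 0 = 0) (hqpos : 0 < q 1)
    (hqmono : ∀ i, 1 ≤ i → i < n → q i < q (i + 1))
    (hratiomono : ∀ i, 1 ≤ i → i < n →
      (p i - p (i - 1)) / (q i - q (i - 1)) <
        (p (i + 1) - p i) / (q (i + 1) - q i))
    (μ : ℕ → ℕ) (hμ0 : μ 0 = 0) (hμk : μ k = n)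
    (hμmono : ∀ j, j < k → μ j < μ (j + 1))
    (hgroupconv : ∀ j, 1 ≤ j → j ≤ k → 1 < μ j - μ (j - 1) →
      ConvexOn ℝ
        (Set.Icc ((p (μ (j - 1) + 1) - p (μ (j - 1))) / (q (μ (j - 1) + 1) - q (μ (j - 1))))
                 ((p (μ j) - p (μ j - 1)) / (q (μ j) - q (μ j - 1))))
        (fun m => F m * m)) :
    p n - ∑ i ∈ Finset.Icc 1 n,
        (p i - p (i - 1)) * F ((p i - p (i - 1)) / (q i - q (i - 1)))
      ≤ p n - ∑ j ∈ Finset.Icc 1 k,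
          (p (μ j) - p (μ (j - 1))) *
            F ((p (μ j) - p (μ (j - 1))) / (q (μ j) - q (μ (j - 1)))) := by
  have hq : ∀ i ∈ Ioc 0 n, q (i - 1) < q i := by
    rintro (_ | i) hi
    · simp at hi
    obtain rfl | hi1 := i.eq_zero_or_pos
    · simpa [hq0] using hqpos
    · simpa using hqmono i hi1 (by simp at hi; omega)
  have hm : MonotoneOn (fun i => (p i - p (i - 1)) / (q i - q (i - 1))) (Set.Icc 1 n) :=
    monotoneOn_of_le_succ Set.ordConnected_Icc fun i _ hi hi' => by
      simpa using (hratiomono i hi.1 (by simpa using hi'.2)).le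
  have hμ : MonotoneOn μ (Set.Iic k) :=
    (strictMonoOn_Iic_of_lt_succ fun j hj => by simpa using hμmono j hj).monotoneOn
  have hIcc : Icc 1 n = Ioc (μ 0) (μ k) := by rw [hμ0, hμk, ← Icc_add_one_left_eq_Ioc, zero_add]
  rw [hIcc, sum_Ioc_eq_sum_sum_Ioc _ hμ]
  refine sub_le_sub_left (sum_le_sum fun j hj => ?_) _
  obtain ⟨hj1, hjk⟩ := mem_Icc.1 hj
  have hμj : μ (j - 1) < μ j := by simpa [Nat.sub_add_cancel hj1] using hμmono (j - 1) (by omega)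
  have hμjn : μ j ≤ n := hμk ▸ hμ (by simp [hjk]) (by simp) hjk
  refine merged_block_loss_le F p q hμj (fun i hi => hq i ?_)
    (hm.mono (Set.Icc_subset_Icc (by omega) hμjn)) (hgroupconv j hj1 hjk)
  simp only [mem_Ioc] at hi ⊢
  omega

/-- Sub-menu dominance under groupwise convexity. Given a menu with
strictly increasing prices, qualities, and ratios `m_i`, and a strictly increasing
selection `μ` of indices with `μ k = n` (and `μ 0 = 0`), if `F(m)·m` is convex on
`[m_{μ(j-1)+1}, m_{μ(j)}]` for every group with more than one element, then the
sub-menu revenue is at least the full-menu revenue. -/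
theorem submenu_dominance
    (F : ℝ → ℝ) (a b : ℝ) (ha : 0 ≤ a) (hab : a < b)
    (hFcont : ContinuousOn F (Set.Icc a b))
    (n k : ℕ) (hn : 1 ≤ n) (hk : 1 ≤ k) (p q : ℕ → ℝ)
    (hp0 : p 0 = 0) (hq0 : q 0 = 0)
    (hppos : 0 < p 1) (hqpos : 0 < q 1)
    (hpmono : ∀ i, 1 ≤ i → i < n → p i < p (i + 1))
    (hqmono : ∀ i, 1 ≤ i → i < n → q i < q (i + 1))
    (hratio : ∀ i, 1 ≤ i → i ≤ n →
      (p i - p (i - 1)) / (q i - q (i - 1)) ∈ Set.Icc a b)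
    (hratiomono : ∀ i, 1 ≤ i → i < n →
      (p i - p (i - 1)) / (q i - q (i - 1)) <
        (p (i + 1) - p i) / (q (i + 1) - q i))
    (μ : ℕ → ℕ) (hμ0 : μ 0 = 0) (hμk : μ k = n)
    (hμmono : ∀ j, j < k → μ j < μ (j + 1))
    (hgroupconv : ∀ j, 1 ≤ j → j ≤ k → 1 < μ j - μ (j - 1) →
      ConvexOn ℝ
        (Set.Icc ((p (μ (j - 1) + 1) - p (μ (j - 1))) / (q (μ (j - 1) + 1) - q (μ (j - 1))))
                 ((p (μ j) - p (μ j - 1)) / (q (μ j) - q (μ j - 1))))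
        (fun m => F m * m)) :
    p n - ∑ i ∈ Finset.Icc 1 n,
        (p i - p (i - 1)) * F ((p i - p (i - 1)) / (q i - q (i - 1)))
      ≤ p n - ∑ j ∈ Finset.Icc 1 k,
          (p (μ j) - p (μ (j - 1))) *
            F ((p (μ j) - p (μ (j - 1))) / (q (μ j) - q (μ (j - 1)))) :=
  submenu_dominance_general F n k p q hq0 hqpos hqmono hratiomono μ hμ0 hμk hμmono hgroupconv
end

section
/- Let n ≥ 1, fix qualities 0 < q₁ < ⋯ < q_n and positive constants κ₁,…,κ_n and α > 0. Let F be a nondecreasing continuous CDF. For price vectors p, p' in the convex set P (as defined by positive demands with strictly increasing ratio sequence, p₀=q₀=0), define supply sᵢ(pᵢ) = κᵢ·pᵢ^{1/α} and demands dᵢ(p) = F(mᵢ₊₁(p)) - F(mᵢ(p)) for i < n, dₙ(p) = 1 - F(mₙ(p)), where mᵢ(p) = (pᵢ - pᵢ₋₁)/(qᵢ - qᵢ₋₁). Then the excess supply map ζ(p) = (s₁(p₁)-d₁(p),…,sₙ(pₙ)-dₙ(p)) is strictly monotone on P: for all p ≠ p' in P, ⟨ζ(p) - ζ(p'), p - p'⟩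 > 0. -/
/-!
Supply is separable with strictly increasing components `t ↦ κᵢ t^(1/α)`, so it contributes a
strictly positive term to `⟨ζ p - ζ p', p - p'⟩`. For demand, write `dᵢ(p) - dᵢ(p') = gᵢ₊₁ - gᵢ`
with `gᵢ = F(mᵢ(p)) - F(mᵢ(p'))` and `gₙ₊₁ = 0` (the constant `1` in `dₙ` cancels). Summation by
parts, using `p₀ = p'₀ = 0`, turns the demand term into
`-∑ᵢ (qᵢ - qᵢ₋₁) (mᵢ(p) - mᵢ(p')) (F(mᵢ(p)) - F(mᵢ(p')))`, which is `≤ 0` because `F` is monotone.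
-/

open Real Finset

theorem sum_Icc_mul_sub_eq {α : Type*} [Ring α] (u g : ℕ → α) (n : ℕ) :
    ∑ i ∈ Icc 1 n, u i * (g (i + 1) - g i)
      = u n * g (n + 1) - u 0 * g 1 - ∑ i ∈ Icc 1 n, (u i - u (i - 1)) * g i := by
  induction n with
  | zero => simp
  | succ k ih =>
    rw [sum_Icc_succ_top (by omega), sum_Icc_succ_top (by omega), ih, Nat.add_sub_cancel]
    noncomm_ring

section OrderedRing

variable {α : Type*} [Ring α] [LinearOrder α] [IsStrictOrderedRing α]

theorem StrictMonoOn.sub_mul_sub_pos {f : α → α} {s : Set α} (hf : StrictMonoOn f s)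
    {x y : α} (hx : x ∈ s) (hy : y ∈ s) (hxy : x ≠ y) : 0 < (f x - f y) * (x - y) := by
  rcases hxy.lt_or_gt with hlt | hgt
  · exact mul_pos_of_neg_of_neg (sub_neg.2 (hf hx hy hlt)) (sub_neg.2 hlt)
  · exact mul_pos (sub_pos.2 (hf hy hx hgt)) (sub_pos.2 hgt)

theorem sum_sub_mul_sub_pos {ι : Type*} {t : Finset ι} {f : ι → α → α} {s : Set α}
    {x y : ι → α} (hf : ∀ i ∈ t, StrictMonoOn (f i) s) (hx : ∀ i ∈ t, x i ∈ s)
    (hy : ∀ i ∈ t, y i ∈ s) (hxy : ∃ i ∈ t, x i ≠ y i) :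
    0 < ∑ i ∈ t, (f i (x i) - f i (y i)) * (x i - y i) := by
  obtain ⟨j, hj, hxyj⟩ := hxy
  refine sum_pos' (fun i hi ↦ ?_) ⟨j, hj, (hf j hj).sub_mul_sub_pos (hx j hj) (hy j hj) hxyj⟩
  exact (monovaryOn_id_iff.2 (hf i hi).monotoneOn).sub_mul_sub_nonneg (hy i hi) (hx i hi)

theorem sum_Icc_mul_sub_nonpos {u g : ℕ → α} {n : ℕ} (hu : u 0 = 0) (hg : g (n + 1) = 0)
    (h : ∀ i ∈ Icc 1 n, 0 ≤ (u i - u (i - 1)) * g i) :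
    ∑ i ∈ Icc 1 n, u i * (g (i + 1) - g i) ≤ 0 := by
  rw [sum_Icc_mul_sub_eq, hu, hg]
  simpa using sum_nonneg h

end OrderedRing

theorem lt_apply_of_lt_apply_one {β : Type*} [Preorder β] {p : ℕ → β} {a : β} {n : ℕ}
    (h1 : a < p 1) (hinc : ∀ i, 1 ≤ i → i < n → p i < p (i + 1)) :
    ∀ i ∈ Icc 1 n, a < p i := by
  intro i hi
  rw [mem_Icc] at hi
  induction i, hi.1 using Nat.le_induction with
  | base => exact h1
  | succ k hk ih => exact (ih ⟨hk, by omega⟩).trans (hinc k hk (by omega))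

theorem apply_pred_lt_apply {β : Type*} [Preorder β] {q : ℕ → β} {n : ℕ} (h0 : q 0 < q 1)
    (hinc : ∀ i, 1 ≤ i → i < n → q i < q (i + 1)) :
    ∀ i ∈ Icc 1 n, q (i - 1) < q i := by
  intro i hi
  rw [mem_Icc] at hi
  obtain rfl | hlt := hi.1.eq_or_lt
  · exact h0
  · simpa [Nat.sub_add_cancel hi.1] using hinc (i - 1) (by omega) (by omega)

theorem sum_sub_mul_nonpos_of_cdf_demand {F : ℝ → ℝ} (hF : Monotone F) {n : ℕ}
    {u w x x' D D' : ℕ → ℝ} (hu0 : u 0 = 0) (hw : ∀ i ∈ Icc 1 n, 0 ≤ w i)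
    (hu : ∀ i ∈ Icc 1 n, u i - u (i - 1) = w i * (x i - x' i))
    (hD : ∀ i, 1 ≤ i → i < n → D i = F (x (i + 1)) - F (x i)) (hDn : D n = 1 - F (x n))
    (hD' : ∀ i, 1 ≤ i → i < n → D' i = F (x' (i + 1)) - F (x' i)) (hD'n : D' n = 1 - F (x' n)) :
    ∑ i ∈ Icc 1 n, (D i - D' i) * u i ≤ 0 := by
  obtain ⟨g, hg, hgn⟩ : ∃ g : ℕ → ℝ, (∀ i ≤ n, g i = F (x i) - F (x' i)) ∧ g (n + 1) = 0 :=
    ⟨fun i ↦ if i ≤ n then F (x i) - F (x' i) else 0, fun i hi ↦ if_pos hi, if_neg (by omega)⟩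
  have hDg : ∀ i ∈ Icc 1 n, D i - D' i = g (i + 1) - g i := by
    intro i hi
    rw [mem_Icc] at hi
    obtain hlt | rfl := hi.2.lt_or_eq
    · rw [hD i hi.1 hlt, hD' i hi.1 hlt, hg i hi.2, hg (i + 1) hlt]
      ring
    · rw [hDn, hD'n, hg i le_rfl, hgn]
      ring
  rw [sum_congr rfl fun i hi ↦ by rw [hDg i hi, mul_comm]]
  refine sum_Icc_mul_sub_nonpos hu0 hgn fun i hi ↦ ?_
  rw [hu i hi, hg i (mem_Icc.1 hi).2, mul_assoc, mul_comm (x i - x' i)]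
  exact mul_nonneg (hw i hi) ((monovary_id_iff.2 hF).sub_mul_sub_nonneg (x' i) (x i))

theorem excess_supply_strictly_monotone_general
    (n : ℕ) (q κ : ℕ → ℝ) (hq0 : q 0 = 0)
    (hqpos : 0 < q 1) (hqmono : ∀ i, 1 ≤ i → i < n → q i < q (i + 1))
    (hκ : ∀ i, 1 ≤ i → i ≤ n → 0 < κ i)
    (α : ℝ) (hα : 0 < α)
    (a b : ℝ)
    (F : ℝ → ℝ) (hFmono : Monotone F)
    -- the ratio function
    (m : (ℕ → ℝ) → ℕ → ℝ)
    (hm : ∀ p i, m p i = (p i - p (i - 1)) / (q i - q (i - 1)))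
    -- supply and demand
    (s : ℕ → ℝ → ℝ) (hs : ∀ i t, s i t = κ i * t ^ (1 / α))
    (d : (ℕ → ℝ) → ℕ → ℝ)
    (hd : ∀ p i, 1 ≤ i → i < n → d p i = F (m p (i + 1)) - F (m p i))
    (hdn : ∀ p, d p n = 1 - F (m p n))
    -- the admissible set P
    (P : Set (ℕ → ℝ))
    (hP : P = {p : ℕ → ℝ | p 0 = 0 ∧ 0 < p 1 ∧
      (∀ i, 1 ≤ i → i < n → p i < p (i + 1)) ∧
      (∀ i, 1 ≤ i → i < n → m p i < m p (i + 1)) ∧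
      m p n < b ∧ (∀ i, 1 ≤ i → i ≤ n → m p i ∈ Set.Icc a b)}) :
    ∀ p ∈ P, ∀ p' ∈ P, (∃ i, 1 ≤ i ∧ i ≤ n ∧ p i ≠ p' i) →
      0 < ∑ i ∈ Finset.Icc 1 n,
        ((s i (p i) - d p i) - (s i (p' i) - d p' i)) * (p i - p' i) := by
  intro p hp p' hp' ⟨i₀, hi₀1, hi₀n, hi₀⟩
  rw [hP] at hp hp'
  obtain ⟨hp0, hp1, hpinc, -⟩ := hp
  obtain ⟨hp'0, hp'1, hp'inc, -⟩ := hp'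
  have hsupply : 0 < ∑ i ∈ Icc 1 n, (s i (p i) - s i (p' i)) * (p i - p' i) := by
    refine sum_sub_mul_sub_pos (s := Set.Ici 0) (fun i hi ↦ ?_)
      (fun i hi ↦ (lt_apply_of_lt_apply_one hp1 hpinc i hi).le)
      (fun i hi ↦ (lt_apply_of_lt_apply_one hp'1 hp'inc i hi).le)
      ⟨i₀, mem_Icc.2 ⟨hi₀1, hi₀n⟩, hi₀⟩
    rw [mem_Icc] at hi
    rw [funext (hs i)]
    exact (strictMono_mul_left_of_pos (hκ i hi.1 hi.2)).comp_strictMonoOn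
      (strictMonoOn_rpow_Ici_of_exponent_pos (one_div_pos.2 hα))
  have hdemand : ∑ i ∈ Icc 1 n, (d p i - d p' i) * (p i - p' i) ≤ 0 := by
    have hq := apply_pred_lt_apply (hq0 ▸ hqpos) hqmono
    refine sum_sub_mul_nonpos_of_cdf_demand hFmono (u := fun i ↦ p i - p' i)
      (by simp only [hp0, hp'0, sub_zero]) (fun i hi ↦ (sub_pos.2 (hq i hi)).le) (fun i hi ↦ ?_)
      (hd p) (hdn p) (hd p') (hdn p')
    rw [hm, hm, div_sub_div_same, mul_div_cancel₀ _ (sub_pos.2 (hq i hi)).ne', sub_sub_sub_comm]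
  calc 0 < ∑ i ∈ Icc 1 n, (s i (p i) - s i (p' i)) * (p i - p' i)
        - ∑ i ∈ Icc 1 n, (d p i - d p' i) * (p i - p' i) := by linarith
    _ = _ := by
      rw [← sum_sub_distrib]
      exact sum_congr rfl fun i _ ↦ by ring

/-- The excess supply map `ζ p = (sᵢ(pᵢ) - dᵢ(p))ᵢ` is strictly monotone on
the convex set `P` of admissible price vectors: `⟨ζ p - ζ p', p - p'⟩ > 0` for `p ≠ p'`. -/
theorem excess_supply_strictly_monotone
    (n : ℕ) (hn : 1 ≤ n) (q κ : ℕ → ℝ) (hq0 : q 0 = 0)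
    (hqpos : 0 < q 1) (hqmono : ∀ i, 1 ≤ i → i < n → q i < q (i + 1))
    (hκ : ∀ i, 1 ≤ i → i ≤ n → 0 < κ i)
    (α : ℝ) (hα : 0 < α)
    (a b : ℝ) (ha : 0 ≤ a) (hab : a < b)
    (F : ℝ → ℝ) (hFcont : Continuous F) (hFmono : Monotone F)
    -- the ratio function
    (m : (ℕ → ℝ) → ℕ → ℝ)
    (hm : ∀ p i, m p i = (p i - p (i - 1)) / (q i - q (i - 1)))
    -- supply and demand
    (s : ℕ → ℝ → ℝ) (hs : ∀ i t, s i t = κ i * t ^ (1 / α))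
    (d : (ℕ → ℝ) → ℕ → ℝ)
    (hd : ∀ p i, 1 ≤ i → i < n → d p i = F (m p (i + 1)) - F (m p i))
    (hdn : ∀ p, d p n = 1 - F (m p n))
    -- the admissible set P
    (P : Set (ℕ → ℝ))
    (hP : P = {p : ℕ → ℝ | p 0 = 0 ∧ 0 < p 1 ∧
      (∀ i, 1 ≤ i → i < n → p i < p (i + 1)) ∧
      (∀ i, 1 ≤ i → i < n → m p i < m p (i + 1)) ∧
      m p n < b ∧ (∀ i, 1 ≤ i → i ≤ n → m p i ∈ Set.Icc a b)}) :
    ∀ p ∈ P, ∀ p' ∈ P, (∃ i, 1 ≤ i ∧ i ≤ n ∧ p i ≠ p' i) →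
      0 < ∑ i ∈ Finset.Icc 1 n,
        ((s i (p i) - d p i) - (s i (p' i) - d p' i)) * (p i - p' i) :=
  excess_supply_strictly_monotone_general n q κ hq0 hqpos hqmono hκ α hα a b F hFmono m hm s hs d hd
    hdn P hP
end

section
/- Let n ≥ 1, fix qualities 0 < q₁ < ⋯ < q_n, positive constants κᵢ, α > 0, and a nondecreasing continuous F with F(b)=1. On the convex open set P of admissible price vectors, define ψ(p) = Σᵢ κᵢ·pᵢ^{(α+1)/α}/(1 + 1/α) - pₙ + Σ_{i=0}^{n-1} F₂(mᵢ₊₁(p))·(qᵢ₊₁ - qᵢ), where F₂(x) = ∫_a^x F(m) dm, mᵢ(p) = (pᵢ-pᵢ₋₁)/(qᵢ-qᵢ₋₁), p₀=q₀=0. Then ψ is continuously differentiable on P and its partial derivatives satisfy ∂ψ/∂pᵢ(p) = sᵢ(pᵢ) - dᵢ(p), with sᵢ(pᵢ)=κᵢ pᵢ^{1/α}, dᵢ(p) = F(mᵢ₊₁(p)) - F(mᵢ(p)) for i<n and dₙ(p) = 1 - F(mₙ(p)). -/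
/-!
Moving only the coordinate `pᵢ` changes three kinds of summands of `ψ`: the power term
`κᵢ pᵢ ^ r / r` with `r = 1 + 1/α ≥ 1`, whose derivative is `κᵢ pᵢ ^ (1/α)` at every real `pᵢ`;
the linear term `-pₙ` (only when `i = n`); and the terms `F₂(mᵢ)(qᵢ - qᵢ₋₁)` and
`F₂(mᵢ₊₁)(qᵢ₊₁ - qᵢ)` (the latter only when `i < n`), which by the fundamental theorem of
calculus contribute `F(mᵢ)` and `-F(mᵢ₊₁)`.
The gradient is continuous because `F` and `t ↦ t ^ (1/α)` are.
-/

open Real Finset Function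

theorem hasDerivAt_update_apply {ι : Type*} [DecidableEq ι] (p : ι → ℝ) (i k : ι) (x : ℝ) :
    HasDerivAt (fun t => update p i t k) ((Pi.single i 1 : ι → ℝ) k) x := by
  by_cases hk : k = i
  · subst hk
    simpa only [update_self, Pi.single_eq_same] using hasDerivAt_id' x
  · simpa only [update_of_ne hk, Pi.single_eq_of_ne hk] using hasDerivAt_const x (p k)

theorem hasDerivAt_sum_update_apply {ι : Type*} [DecidableEq ι] {s : Finset ι} {i : ι}
    {g : ι → ℝ → ℝ} {g' : ℝ} (p : ι → ℝ) (hi : i ∈ s) (hg : HasDerivAt (g i) g' (p i)) :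
    HasDerivAt (fun t => ∑ j ∈ s, g j (update p i t j)) g' (p i) := by
  have hsplit : (fun t => ∑ j ∈ s, g j (update p i t j))
      = fun t => g i t + ∑ j ∈ s.erase i, g j (p j) := by
    funext t
    rw [← add_sum_erase s _ hi, update_self]
    congr 1
    exact sum_congr rfl fun j hj => by rw [update_of_ne (ne_of_mem_erase hj)]
  rw [hsplit]
  exact hg.add_const _

theorem sum_range_mul_single_succ_sub_single (c : ℕ → ℝ) {n i : ℕ} (hi : 1 ≤ i) (hin : i ≤ n) :
    ∑ j ∈ range n, c j * ((Pi.single i 1 : ℕ → ℝ) (j + 1) - (Pi.single i 1 : ℕ → ℝ) j)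
      = c (i - 1) - if i < n then c i else 0 := by
  obtain ⟨k, rfl⟩ := Nat.exists_eq_add_of_le' hi
  simp only [Pi.single_apply, Nat.add_right_cancel_iff, mul_sub, mul_ite, mul_one, mul_zero,
    sum_sub_distrib, sum_ite_eq', mem_range, add_tsub_cancel_right, sub_left_inj, ite_eq_left_iff,
    not_lt]
  omega

theorem hasDerivAt_sum_range_update_succ_sub {φ φ' : ℕ → ℝ → ℝ} {n i : ℕ} (p : ℕ → ℝ)
    (hi : 1 ≤ i) (hin : i ≤ n)
    (hφ : ∀ j < n, HasDerivAt (φ j) (φ' j (p (j + 1) - p j)) (p (j + 1) - p j)) :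
    HasDerivAt (fun t => ∑ j ∈ range n, φ j (update p i t (j + 1) - update p i t j))
      (φ' (i - 1) (p i - p (i - 1)) - if i < n then φ' i (p (i + 1) - p i) else 0) (p i) := by
  have hterm : ∀ j ∈ range n, HasDerivAt (fun t => φ j (update p i t (j + 1) - update p i t j))
      (φ' j (p (j + 1) - p j) * ((Pi.single i 1 : ℕ → ℝ) (j + 1) - (Pi.single i 1 : ℕ → ℝ) j))
      (p i) := fun j hj =>
    (hφ j (mem_range.1 hj)).comp_of_eq (p i)
      ((hasDerivAt_update_apply p i (j + 1) (p i)).sub (hasDerivAt_update_apply p i j (p i)))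
      (by simp only [update_eq_self])
  refine (HasDerivAt.fun_sum hterm).congr_deriv ?_
  rw [sum_range_mul_single_succ_sub_single _ hi hin, Nat.sub_add_cancel hi]

theorem hasDerivAt_comp_div_mul {G : ℝ → ℝ} {g' c x : ℝ} (hG : HasDerivAt G g' (x / c))
    (hc : c ≠ 0) : HasDerivAt (fun y => G (y / c) * c) g' x :=
  ((hG.comp x ((hasDerivAt_id' x).div_const c)).mul_const c).congr_deriv (by field_simp)

theorem hasDerivAt_mul_rpow_div_self {c r x : ℝ} (hr : 1 ≤ r) :
    HasDerivAt (fun t => c * t ^ r / r) (c * x ^ (r - 1)) x :=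
  (((hasDerivAt_rpow_const (Or.inr hr)).const_mul c).div_const r).congr_deriv
    (by field_simp [(by linarith : r ≠ 0)])

theorem potential_gradient_is_excess_supply_general
    (n : ℕ) (q κ : ℕ → ℝ) (hq0 : q 0 = 0)
    (hqpos : 0 < q 1) (hqmono : ∀ i, 1 ≤ i → i < n → q i < q (i + 1))
    (α : ℝ) (hα : 0 < α)
    (a : ℝ)
    (F : ℝ → ℝ) (hFcont : Continuous F)
    (m : (ℕ → ℝ) → ℕ → ℝ)
    (hm : ∀ p i, m p i = (p i - p (i - 1)) / (q i - q (i - 1)))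
    (s : ℕ → ℝ → ℝ) (hs : ∀ i t, s i t = κ i * t ^ (1 / α))
    (d : (ℕ → ℝ) → ℕ → ℝ)
    (hd : ∀ p i, 1 ≤ i → i < n → d p i = F (m p (i + 1)) - F (m p i))
    (hdn : ∀ p, d p n = 1 - F (m p n))
    (F₂ : ℝ → ℝ) (hF₂ : ∀ x, F₂ x = ∫ t in a..x, F t)
    (ψ : (ℕ → ℝ) → ℝ)
    (hψ : ∀ p, ψ p =
      (∑ i ∈ Finset.Icc 1 n, κ i * p i ^ ((α + 1) / α) / (1 + 1 / α)) - p n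
        + ∑ i ∈ Finset.range n, F₂ (m p (i + 1)) * (q (i + 1) - q i))
    (P : Set (ℕ → ℝ)) :
    ∀ i, 1 ≤ i → i ≤ n →
      (∀ p ∈ P,
        HasDerivAt (fun t => ψ (Function.update p i t)) (s i (p i) - d p i) (p i))
      ∧ ContinuousOn (fun p => s i (p i) - d p i) P := by
  intro i hi hin
  have hd' : ∀ p, d p i = (if i < n then F (m p (i + 1)) else 1) - F (m p i) := by
    intro p
    split_ifs with hlt
    · exact hd p i hi hlt
    · rw [le_antisymm hin (not_lt.1 hlt), hdn]
  refine ⟨fun p _ => ?_, Continuous.continuousOn ?_⟩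
  · have hexp : (α + 1) / α = 1 + 1 / α := by field_simp
    have hgap : ∀ j < n, q (j + 1) - q j ≠ 0 := by
      intro j hj
      rcases Nat.eq_zero_or_pos j with rfl | hjpos
      · simpa [hq0] using hqpos.ne'
      · exact sub_ne_zero.2 (hqmono j hjpos hj).ne'
    have hF₂_deriv : ∀ x, HasDerivAt F₂ (F x) x := fun x => by
      simpa only [← funext hF₂] using (hFcont.integral_hasStrictDerivAt a x).hasDerivAt
    have hpow := hasDerivAt_sum_update_apply (g := fun j t => κ j * t ^ (1 + 1 / α) / (1 + 1 / α))
      p (mem_Icc.2 ⟨hi, hin⟩) (hasDerivAt_mul_rpow_div_self (by simp [hα.le]))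
    have hlast := hasDerivAt_update_apply p i n (p i)
    have hchain := hasDerivAt_sum_range_update_succ_sub (φ' := fun j y => F (y / (q (j + 1) - q j)))
      p hi hin fun j hj => hasDerivAt_comp_div_mul (hF₂_deriv _) (hgap j hj)
    simp only [hψ, hm, hexp, Nat.add_sub_cancel]
    refine ((hpow.sub hlast).add hchain).congr_deriv ?_
    simp only [hs, hd', hm, Nat.sub_add_cancel hi, Nat.add_sub_cancel, add_sub_cancel_left]
    rcases hin.lt_or_eq with hlt | rfl
    · rw [if_pos hlt, if_pos hlt, Pi.single_eq_of_ne hlt.ne']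
      ring
    · rw [if_neg (lt_irrefl i), if_neg (lt_irrefl i), Pi.single_eq_same]
      ring
  · simp only [hs, hd', hm]
    split_ifs <;> fun_prop (disch := positivity)

/-- The potential `ψ` is continuously differentiable on `P` with
partial derivatives equal to excess supply: `∂ψ/∂pᵢ (p) = sᵢ(pᵢ) - dᵢ(p)`. -/
theorem potential_gradient_is_excess_supply
    (n : ℕ) (hn : 1 ≤ n) (q κ : ℕ → ℝ) (hq0 : q 0 = 0)
    (hqpos : 0 < q 1) (hqmono : ∀ i, 1 ≤ i → i < n → q i < q (i + 1))
    (hκ : ∀ i, 1 ≤ i → i ≤ n → 0 < κ i)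
    (α : ℝ) (hα : 0 < α)
    (a b : ℝ) (ha : 0 ≤ a) (hab : a < b)
    (F : ℝ → ℝ) (hFcont : Continuous F) (hFmono : Monotone F) (hFb : F b = 1)
    (m : (ℕ → ℝ) → ℕ → ℝ)
    (hm : ∀ p i, m p i = (p i - p (i - 1)) / (q i - q (i - 1)))
    (s : ℕ → ℝ → ℝ) (hs : ∀ i t, s i t = κ i * t ^ (1 / α))
    (d : (ℕ → ℝ) → ℕ → ℝ)
    (hd : ∀ p i, 1 ≤ i → i < n → d p i = F (m p (i + 1)) - F (m p i))
    (hdn : ∀ p, d p n = 1 - F (m p n))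
    (F₂ : ℝ → ℝ) (hF₂ : ∀ x, F₂ x = ∫ t in a..x, F t)
    (ψ : (ℕ → ℝ) → ℝ)
    (hψ : ∀ p, ψ p =
      (∑ i ∈ Finset.Icc 1 n, κ i * p i ^ ((α + 1) / α) / (1 + 1 / α)) - p n
        + ∑ i ∈ Finset.range n, F₂ (m p (i + 1)) * (q (i + 1) - q i))
    (P : Set (ℕ → ℝ))
    (hP : P = {p : ℕ → ℝ | p 0 = 0 ∧ 0 < p 1 ∧
      (∀ i, 1 ≤ i → i < n → p i < p (i + 1)) ∧
      (∀ i, 1 ≤ i → i < n → m p i < m p (i + 1)) ∧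
      m p n < b ∧ (∀ i, 1 ≤ i → i ≤ n → m p i ∈ Set.Icc a b)}) :
    ∀ i, 1 ≤ i → i ≤ n →
      (∀ p ∈ P,
        HasDerivAt (fun t => ψ (Function.update p i t)) (s i (p i) - d p i) (p i))
      ∧ ContinuousOn (fun p => s i (p i) - d p i) P :=
  potential_gradient_is_excess_supply_general n q κ hq0 hqpos hqmono α hα a F hFcont m hm s hs d hd
    hdn F₂ hF₂ ψ hψ P
end
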